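/- arXiv:1804.00531 — 4 statements merged into one kernel-verified Lean document; each statement's English description precedes it below -/
import Mathlib

section
/- Let H be a real Hilbert space, let (u_k) be a bounded sequence in H, and let (g_k^{(n)})_{n ∈ ℕ} be sequences of unitary operators on H such that for m ≠ n, (g_k^{(m)})^{-1} g_k^{(n)} converges to 0 in the weak operator topology as k → ∞. Suppose for each n the sequence (g_k^{(n)})^{-1} u_k converges weakly to w^{(n)} ∈ H. Then ∑_{n} ‖w^{(n)}‖² ≤ limsup_k ‖u_k‖². -/
/-!
Put `S_k = ∑_{n ∈ F} g_k^{(n)} w^{(n)}` for a finite set `F`. Expanding `0 ≤ ‖u_k - S_k‖²` gives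
`2 ⟪u_k, S_k⟫ - ‖S_k‖² ≤ ‖u_k‖²`. Weak convergence of `(g_k^{(n)})⁻¹ u_k` makes `⟪u_k, S_k⟫` tend to
`∑_{n ∈ F} ‖w^{(n)}‖²`, and decoupling kills the off-diagonal terms of `‖S_k‖²`, which therefore has
the same limit. Hence every finite partial sum of `∑ ‖w^{(n)}‖²` is at most `limsup ‖u_k‖²`.
-/

open Filter Topology

theorem le_limsup_of_tendsto_of_le {α β : Type*} [ConditionallyCompleteLinearOrder α]
    [TopologicalSpace α] [OrderTopology α] {f : Filter β} [NeBot f] {u v : β → α} {a : α}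
    (hv : Tendsto v f (𝓝 a)) (hvu : v ≤ᶠ[f] u) (hu : IsBoundedUnder (· ≤ ·) f u) :
    a ≤ limsup u f :=
  hv.limsup_eq ▸ limsup_le_limsup hvu hv.isCoboundedUnder_le hu

theorem LinearIsometryEquiv.inner_map_right_eq_flip {𝕜 E E' : Type*} [RCLike 𝕜]
    [SeminormedAddCommGroup E] [InnerProductSpace 𝕜 E] [SeminormedAddCommGroup E']
    [InnerProductSpace 𝕜 E'] (f : E ≃ₗᵢ[𝕜] E') (x : E') (y : E) :
    inner 𝕜 x (f y) = inner 𝕜 (f.symm x) y :=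
  (f.symm.inner_map_eq_flip x y).symm

section InnerProductSpace

variable {H : Type*} [NormedAddCommGroup H] [InnerProductSpace ℝ H]

theorem two_mul_inner_sub_norm_sq_le (u v : H) : 2 * inner ℝ u v - ‖v‖ ^ 2 ≤ ‖u‖ ^ 2 := by
  nlinarith [norm_sub_sq_real u v, sq_nonneg ‖u - v‖]

theorem norm_sum_sq_eq_sum_sum_inner {ι : Type*} (F : Finset ι) (v : ι → H) :
    ‖∑ n ∈ F, v n‖ ^ 2 = ∑ n ∈ F, ∑ m ∈ F, inner ℝ (v n) (v m) := by
  simp_rw [← real_inner_self_eq_norm_sq, sum_inner, inner_sum]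

theorem tendsto_norm_sum_sq_of_tendsto_inner {ι β : Type*} [DecidableEq ι] {l : Filter β}
    (F : Finset ι) (v : β → ι → H) (c : ι → ℝ)
    (h : ∀ n ∈ F, ∀ m ∈ F,
      Tendsto (fun k => inner ℝ (v k n) (v k m)) l (𝓝 (if n = m then c n else 0))) :
    Tendsto (fun k => ‖∑ n ∈ F, v k n‖ ^ 2) l (𝓝 (∑ n ∈ F, c n)) := by
  simp_rw [norm_sum_sq_eq_sum_sum_inner]
  have hdiag : ∑ n ∈ F, c n = ∑ n ∈ F, ∑ m ∈ F, if n = m then c n else 0 :=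
    Finset.sum_congr rfl fun n hn => by rw [Finset.sum_ite_eq F n fun _ => c n, if_pos hn]
  rw [hdiag]
  exact tendsto_finsetSum _ fun n hn => tendsto_finsetSum _ fun m hm => h n hn m hm

theorem tendsto_inner_map_map_of_decoupled {ι β : Type*} [DecidableEq ι] {l : Filter β}
    (g : β → ι → H ≃ₗᵢ[ℝ] H)
    (hdec : ∀ m n : ι, m ≠ n → ∀ x y : H,
      Tendsto (fun k => inner ℝ ((g k m).symm (g k n x)) y) l (𝓝 0))
    (n m : ι) (x y : H) :
    Tendsto (fun k => inner ℝ (g k n x) (g k m y)) l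
      (𝓝 (if n = m then inner ℝ x y else 0)) := by
  simp_rw [LinearIsometryEquiv.inner_map_right_eq_flip]
  split_ifs with hnm
  · subst hnm
    simp_rw [LinearIsometryEquiv.symm_apply_apply]
    exact tendsto_const_nhds
  · exact hdec m n (Ne.symm hnm) x y

end InnerProductSpace

/-- Plancherel-type inequality: if the unitary sequences (g_k^{(n)}) are pairwise decoupled
and (g_k^{(n)})⁻¹ u_k ⇀ w^{(n)}, then ∑ ‖w^{(n)}‖² ≤ limsup ‖u_k‖². -/
theorem profile_plancherel_inequality {H : Type*} [NormedAddCommGroup H]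
    [InnerProductSpace ℝ H]
    (u : ℕ → H) (hb : ∃ c : ℝ, ∀ k, ‖u k‖ ≤ c)
    (g : ℕ → ℕ → (H ≃ₗᵢ[ℝ] H)) (w : ℕ → H)
    (hdec : ∀ m n : ℕ, m ≠ n → ∀ x y : H,
      Tendsto (fun k => (inner ℝ ((g k m).symm ((g k n) x)) y : ℝ)) atTop (nhds 0))
    (hw : ∀ (n : ℕ) (x : H),
      Tendsto (fun k => (inner ℝ ((g k n).symm (u k)) x : ℝ)) atTop (nhds (inner ℝ (w n) x))) :
    ∑' n, ‖w n‖ ^ 2 ≤ Filter.limsup (fun k => ‖u k‖ ^ 2) atTop := by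
  obtain ⟨c, hc⟩ := hb
  have hbdd : IsBoundedUnder (· ≤ ·) atTop (fun k => ‖u k‖ ^ 2) :=
    isBoundedUnder_of ⟨c ^ 2, fun k => pow_le_pow_left₀ (norm_nonneg _) (hc k) 2⟩
  refine Real.tsum_le_of_sum_le (fun n => sq_nonneg _) fun F => ?_
  let S : ℕ → H := fun k => ∑ n ∈ F, g k n (w n)
  have hcross : Tendsto (fun k => inner ℝ (u k) (S k)) atTop (𝓝 (∑ n ∈ F, ‖w n‖ ^ 2)) := by
    simp_rw [S, inner_sum, LinearIsometryEquiv.inner_map_right_eq_flip,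
      ← real_inner_self_eq_norm_sq]
    exact tendsto_finsetSum _ fun n _ => hw n (w n)
  have hgram : Tendsto (fun k => ‖S k‖ ^ 2) atTop (𝓝 (∑ n ∈ F, ‖w n‖ ^ 2)) :=
    tendsto_norm_sum_sq_of_tendsto_inner F (fun k n => g k n (w n)) _ fun n _ m _ => by
      convert tendsto_inner_map_map_of_decoupled g hdec n m (w n) (w m) using 2
      split_ifs with hnm
      · rw [hnm, real_inner_self_eq_norm_sq]
      · rfl
  refine le_limsup_of_tendsto_of_le ?_
    (Eventually.of_forall fun k => two_mul_inner_sub_norm_sq_le (u k) (S k)) hbdd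
  simpa [two_mul] using (hcross.const_mul 2).sub hgram
end

section
/- Let H be a real Hilbert space, (u_k) a bounded sequence in H converging weakly to w, and (g_k) a sequence of unitary operators on H converging to 0 in the weak operator topology such that g_k^{-1} u_k ⇀ v. Then ‖w‖² + ‖v‖² ≤ limsup_k ‖u_k‖². -/
open Filter Topology

/-! Expanding `0 ≤ ‖u k - w - g k v‖²` and using `⟪u k, g k v⟫ = ⟪(g k)⁻¹ u k, v⟫` gives
`‖u k‖² ≥ 2⟪u k, w⟫ + 2⟪(g k)⁻¹ u k, v⟫ - 2⟪g k v, w⟫ - ‖w‖² - ‖v‖²`.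
By the two weak convergences and `g k v ⇀ 0`, the right-hand side tends to `‖w‖² + ‖v‖²`. -/

section InnerProduct

variable {E : Type*} [NormedAddCommGroup E] [InnerProductSpace ℝ E]

theorem two_inner_add_two_inner_le_norm_sq_add (x y z : E) :
    2 * inner ℝ x y + 2 * inner ℝ x z ≤ ‖x‖ ^ 2 + ‖y‖ ^ 2 + ‖z‖ ^ 2 + 2 * inner ℝ y z := by
  have h := real_inner_self_nonneg (x := x - y - z)
  simp only [inner_sub_left, inner_sub_right, real_inner_self_eq_norm_sq, real_inner_comm x,
    real_inner_comm y z] at h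
  linarith

theorem LinearIsometryEquiv.two_inner_add_two_inner_symm_le (g : E ≃ₗᵢ[ℝ] E) (u w v : E) :
    2 * inner ℝ u w + 2 * inner ℝ (g.symm u) v - 2 * inner ℝ (g v) w - ‖w‖ ^ 2 - ‖v‖ ^ 2
      ≤ ‖u‖ ^ 2 := by
  have h := two_inner_add_two_inner_le_norm_sq_add u w (g v)
  rw [g.norm_map, real_inner_comm (g v) u, g.inner_map_eq_flip, real_inner_comm (g.symm u),
    real_inner_comm (g v) w] at h
  linarith

end InnerProduct

theorem le_limsup_of_tendsto_of_le_s5 {α β : Type*} [ConditionallyCompleteLinearOrder α]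
    [TopologicalSpace α] [OrderTopology α] {f : Filter β} [f.NeBot] {a b : β → α} {L : α}
    (hb : Tendsto b f (𝓝 L)) (hle : ∀ᶠ k in f, b k ≤ a k) (ha : IsBoundedUnder (· ≤ ·) f a) :
    L ≤ limsup a f :=
  hb.limsup_eq ▸ limsup_le_limsup hle hb.isCoboundedUnder_le ha

/-- If u_k ⇀ w, g_k → 0 in the weak operator topology (g_k unitary), and g_k⁻¹ u_k ⇀ v,
then ‖w‖² + ‖v‖² ≤ limsup ‖u_k‖². -/
theorem two_profile_inequality {H : Type*} [NormedAddCommGroup H] [InnerProductSpace ℝ H]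
    (u : ℕ → H) (hb : ∃ c : ℝ, ∀ k, ‖u k‖ ≤ c) (w v : H)
    (g : ℕ → (H ≃ₗᵢ[ℝ] H))
    (hwk : ∀ x : H, Tendsto (fun k => (inner ℝ (u k) x : ℝ)) atTop (nhds (inner ℝ w x)))
    (hg0 : ∀ x y : H, Tendsto (fun k => (inner ℝ ((g k) x) y : ℝ)) atTop (nhds 0))
    (hv : ∀ x : H, Tendsto (fun k => (inner ℝ ((g k).symm (u k)) x : ℝ)) atTop (nhds (inner ℝ v x))) :
    ‖w‖ ^ 2 + ‖v‖ ^ 2 ≤ Filter.limsup (fun k => ‖u k‖ ^ 2) atTop := by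
  obtain ⟨c, hc⟩ := hb
  have hbdd : IsBoundedUnder (· ≤ ·) atTop (fun k => ‖u k‖ ^ 2) :=
    isBoundedUnder_of ⟨c ^ 2, fun k => pow_le_pow_left₀ (norm_nonneg _) (hc k) 2⟩
  have hlim : Tendsto (fun k => 2 * inner ℝ (u k) w + 2 * inner ℝ ((g k).symm (u k)) v
      - 2 * inner ℝ (g k v) w - ‖w‖ ^ 2 - ‖v‖ ^ 2) atTop (𝓝 (‖w‖ ^ 2 + ‖v‖ ^ 2)) := by
    convert (((((hwk w).const_mul 2).add ((hv v).const_mul 2)).sub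
      ((hg0 v w).const_mul 2)).sub_const (‖w‖ ^ 2)).sub_const (‖v‖ ^ 2) using 2
    simp only [real_inner_self_eq_norm_sq]
    ring
  exact le_limsup_of_tendsto_of_le_s5 hlim
    (Eventually.of_forall fun k => (g k).two_inner_add_two_inner_symm_le (u k) w v) hbdd
end

section
/- Let (Ω, μ) be a measure space, p ∈ (1, ∞), and let (u_k) be a bounded sequence in L^p(Ω, μ) converging μ-almost everywhere to a function u. Then ∫ |u_k|^p dμ − ∫ |u_k − u|^p dμ → ∫ |u|^p dμ (the Brezis–Lieb lemma). -/
open Filter MeasureTheory Topology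
open scoped ENNReal

/-!
Write `f_k = |u_k|^p - |u_k - u|^p - |u|^p`. By the mean value theorem, splitting into the cases
`|b| ≤ η |a|` and `|b| > η |a|`, for every `ε > 0` there is `C_ε` with
`||a + b|^p - |a|^p - |b|^p| ≤ ε |a|^p + C_ε |b|^p`; taking `a = u_k - u`, `b = u` shows that
`(|f_k| - ε |u_k - u|^p)⁺` is dominated by `C_ε |u|^p` and tends to `0` a.e., so its integral
tends to `0`. Since `u ∈ Lᵖ` by Fatou's lemma, `∫ |u_k - u|^p ≤ M` uniformly, hence
`limsup ∫ |f_k| ≤ ε M` for every `ε > 0`, i.e. `f_k → 0` in `L¹`.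
-/

lemma abs_rpow_sub_rpow_le_mul_max {p x y : ℝ} (hp : 1 ≤ p) (hx : 0 ≤ x) (hy : 0 ≤ y) :
    |y ^ p - x ^ p| ≤ p * max x y ^ (p - 1) * |y - x| := by
  have hderiv : ∀ t ∈ Set.Icc (min x y) (max x y),
      HasDerivWithinAt (· ^ p) (p * t ^ (p - 1)) (Set.Icc (min x y) (max x y)) t :=
    fun t _ ↦ (Real.hasDerivAt_rpow_const (Or.inr hp)).hasDerivWithinAt
  have hbound : ∀ t ∈ Set.Icc (min x y) (max x y), ‖p * t ^ (p - 1)‖ ≤ p * max x y ^ (p - 1) := by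
    rintro t ⟨ht, ht'⟩
    have ht0 : 0 ≤ t := (le_min hx hy).trans ht
    rw [Real.norm_of_nonneg (by positivity)]
    gcongr
  simpa only [Real.norm_eq_abs] using (convex_Icc _ _).norm_image_sub_le_of_norm_hasDerivWithin_le
    hderiv hbound ⟨min_le_left x y, le_max_left x y⟩ ⟨min_le_right x y, le_max_right x y⟩

lemma add_rpow_sub_one_mul_le {p η x y : ℝ} (hp : 1 ≤ p) (hη : 0 < η) (hx : 0 ≤ x) (hy : 0 ≤ y) :
    (x + y) ^ (p - 1) * y ≤ η * (1 + η) ^ (p - 1) * x ^ p + (1 + η⁻¹) ^ (p - 1) * y ^ p := by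
  have hp1 : 0 ≤ p - 1 := by linarith
  have hpow : ∀ z : ℝ, 0 ≤ z → z ^ (p - 1) * z = z ^ p := fun z hz ↦ by
    rw [← Real.rpow_add_one' hz (by linarith), sub_add_cancel]
  rcases le_or_gt y (η * x) with hyx | hxy
  · calc (x + y) ^ (p - 1) * y ≤ ((1 + η) * x) ^ (p - 1) * (η * x) := by
          gcongr
          linarith
      _ = η * (1 + η) ^ (p - 1) * x ^ p := by
          rw [Real.mul_rpow (by positivity) hx, ← hpow x hx]
          ring
      _ ≤ _ := le_add_of_nonneg_right (by positivity)
  · have hx' : x ≤ η⁻¹ * y := by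
      rw [inv_mul_eq_div, le_div_iff₀ hη]
      linarith
    calc (x + y) ^ (p - 1) * y ≤ ((1 + η⁻¹) * y) ^ (p - 1) * y := by
          gcongr
          linarith
      _ = (1 + η⁻¹) ^ (p - 1) * y ^ p := by
          rw [Real.mul_rpow (by positivity) hy, ← hpow y hy]
          ring
      _ ≤ _ := le_add_of_nonneg_left (by positivity)

lemma exists_abs_abs_add_rpow_sub_sub_le {p ε : ℝ} (hp : 1 ≤ p) (hε : 0 < ε) :
    ∃ C : ℝ, ∀ a b : ℝ, |(|a + b| ^ p - |a| ^ p - |b| ^ p)| ≤ ε * |a| ^ p + C * |b| ^ p := by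
  have hp0 : 0 < p := by linarith
  have hp1 : 0 ≤ p - 1 := by linarith
  set η : ℝ := min 1 (ε / (p * 2 ^ (p - 1)))
  have hη : 0 < η := lt_min one_pos (by positivity)
  have hηε : p * (η * (1 + η) ^ (p - 1)) ≤ ε := by
    calc p * (η * (1 + η) ^ (p - 1)) ≤ p * (ε / (p * 2 ^ (p - 1)) * 2 ^ (p - 1)) := by
          gcongr
          · exact min_le_right _ _
          · linarith [min_le_left 1 (ε / (p * 2 ^ (p - 1)))]
      _ = ε := by field_simp
  refine ⟨p * (1 + η⁻¹) ^ (p - 1) + 1, fun a b ↦ ?_⟩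
  have hmvt : |(|a + b| ^ p - |a| ^ p)| ≤ p * ((|a| + |b|) ^ (p - 1) * |b|) := by
    calc |(|a + b| ^ p - |a| ^ p)| ≤ p * max |a| |a + b| ^ (p - 1) * |(|a + b| - |a|)| :=
          abs_rpow_sub_rpow_le_mul_max hp (abs_nonneg a) (abs_nonneg _)
      _ ≤ p * (|a| + |b|) ^ (p - 1) * |b| := by
          have hmax : max |a| |a + b| ≤ |a| + |b| :=
            max_le (le_add_of_nonneg_right (abs_nonneg b)) (abs_add_le a b)
          have hdiff : |(|a + b| - |a|)| ≤ |b| := by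
            simpa using abs_abs_sub_abs_le_abs_sub (a + b) a
          exact mul_le_mul (by gcongr) hdiff (abs_nonneg _) (by positivity)
      _ = p * ((|a| + |b|) ^ (p - 1) * |b|) := mul_assoc _ _ _
  have hyoung := add_rpow_sub_one_mul_le hp hη (abs_nonneg a) (abs_nonneg b)
  have hb : 0 ≤ |b| ^ p := by positivity
  calc |(|a + b| ^ p - |a| ^ p - |b| ^ p)| ≤ |(|a + b| ^ p - |a| ^ p)| + |b| ^ p := by
        simpa [abs_of_nonneg hb] using abs_sub (|a + b| ^ p - |a| ^ p) (|b| ^ p)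
    _ ≤ p * (η * (1 + η) ^ (p - 1)) * |a| ^ p + (p * (1 + η⁻¹) ^ (p - 1) + 1) * |b| ^ p := by
        nlinarith
    _ ≤ ε * |a| ^ p + (p * (1 + η⁻¹) ^ (p - 1) + 1) * |b| ^ p := by
        gcongr

section

variable {Ω : Type*} [MeasurableSpace Ω] {μ : Measure Ω}

lemma integral_norm_rpow_le_of_eLpNorm_le {E : Type*} [NormedAddCommGroup E] {p : ℝ} (hp : 0 < p)
    {f : Ω → E} (hf : AEStronglyMeasurable f μ) {c : ℝ≥0∞} (hc : c ≠ ⊤)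
    (hfc : eLpNorm f (ENNReal.ofReal p) μ ≤ c) :
    ∫ x, ‖f x‖ ^ p ∂μ ≤ c.toReal ^ p := by
  have hnorm := lpNorm_eq_integral_norm_rpow_toReal (ENNReal.ofReal_pos.2 hp).ne'
    ENNReal.ofReal_ne_top hf
  rw [← toReal_eLpNorm hf, ENNReal.toReal_ofReal hp.le] at hnorm
  rw [← Real.rpow_inv_rpow (integral_nonneg fun x ↦ by positivity) hp.ne', ← hnorm]
  gcongr

lemma norm_max_abs_sub_le_abs {a b c : ℝ} (h : |a| ≤ b + c) : ‖max (|a| - b) 0‖ ≤ |c| := by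
  rw [Real.norm_of_nonneg (le_max_right _ _)]
  exact max_le (by linarith [le_abs_self c]) (abs_nonneg c)

lemma MemLp.integrable_norm_rpow_ofReal {E : Type*} [NormedAddCommGroup E] {p : ℝ} (hp : 0 < p)
    {f : Ω → E} (hf : MemLp f (ENNReal.ofReal p) μ) : Integrable (fun x ↦ ‖f x‖ ^ p) μ := by
  simpa [ENNReal.toReal_ofReal hp.le] using
    hf.integrable_norm_rpow (ENNReal.ofReal_pos.2 hp).ne' ENNReal.ofReal_ne_top

lemma memLp_of_ae_tendsto {E : Type*} [NormedAddCommGroup E] {q c : ℝ≥0∞} {u : ℕ → Ω → E}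
    {u₀ : Ω → E} (hu : ∀ k, AEStronglyMeasurable (u k) μ) (hc : c < ⊤)
    (hbc : ∀ k, eLpNorm (u k) q μ ≤ c) (hae : ∀ᵐ x ∂μ, Tendsto (fun k ↦ u k x) atTop (𝓝 (u₀ x))) :
    MemLp u₀ q μ :=
  ⟨aestronglyMeasurable_of_tendsto_ae atTop hu hae,
    (Lp.eLpNorm_le_of_ae_tendsto (.of_forall hbc) hu hae).trans_lt hc⟩

lemma tendsto_integral_sub_of_tendsto_integral_abs_sub {ι : Type*} {l : Filter ι}
    {F G : ι → Ω → ℝ} {H : Ω → ℝ} (hF : ∀ k, Integrable (F k) μ) (hG : ∀ k, Integrable (G k) μ)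
    (hH : Integrable H μ) (hlim : Tendsto (fun k ↦ ∫ x, |F k x - G k x - H x| ∂μ) l (𝓝 0)) :
    Tendsto (fun k ↦ ∫ x, F k x ∂μ - ∫ x, G k x ∂μ) l (𝓝 (∫ x, H x ∂μ)) := by
  have hsub : Tendsto (fun k ↦ ∫ x, (F k x - G k x - H x) ∂μ) l (𝓝 0) :=
    squeeze_zero_norm (fun k ↦ norm_integral_le_integral_norm _) hlim
  refine (zero_add (∫ x, H x ∂μ) ▸ hsub.add_const (∫ x, H x ∂μ)).congr fun k ↦ ?_
  rw [integral_sub (f := fun x ↦ F k x - G k x) ((hF k).sub (hG k)) hH, integral_sub (hF k) (hG k)]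
  ring

variable {f g : ℕ → Ω → ℝ} {h : Ω → ℝ}

lemma tendsto_integral_max_abs_sub_mul {ε C : ℝ} (hε : 0 ≤ ε)
    (hf : ∀ k, AEStronglyMeasurable (f k) μ) (hg : ∀ k, AEStronglyMeasurable (g k) μ)
    (hg₀ : ∀ k x, 0 ≤ g k x) (hh : Integrable h μ)
    (hdom : ∀ k x, |f k x| ≤ ε * g k x + C * h x)
    (hlim : ∀ᵐ x ∂μ, Tendsto (fun k ↦ f k x) atTop (𝓝 0)) :
    Tendsto (fun k ↦ ∫ x, max (|f k x| - ε * g k x) 0 ∂μ) atTop (𝓝 0) := by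
  have hlim' : ∀ᵐ x ∂μ, Tendsto (fun k ↦ max (|f k x| - ε * g k x) 0) atTop (𝓝 0) := by
    filter_upwards [hlim] with x hx
    refine squeeze_zero (fun k ↦ le_max_right _ _) (fun k ↦ ?_) (by simpa using hx.abs)
    exact max_le (by linarith [mul_nonneg hε (hg₀ k x)]) (abs_nonneg _)
  simpa using tendsto_integral_of_dominated_convergence (f := fun _ ↦ 0) (fun x ↦ |C * h x|)
    (fun k ↦ (((hf k).norm.sub ((hg k).const_mul ε)).sup aestronglyMeasurable_const))
    (hh.const_mul C).abs (fun k ↦ .of_forall fun x ↦ norm_max_abs_sub_le_abs (hdom k x)) hlim'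

lemma tendsto_integral_abs_of_forall_abs_le_mul_add {M : ℝ}
    (hf : ∀ k, AEStronglyMeasurable (f k) μ) (hg : ∀ k, Integrable (g k) μ)
    (hg₀ : ∀ k x, 0 ≤ g k x) (hgM : ∀ k, ∫ x, g k x ∂μ ≤ M) (hh : Integrable h μ)
    (hdom : ∀ ε > 0, ∃ C, ∀ k x, |f k x| ≤ ε * g k x + C * h x)
    (hlim : ∀ᵐ x ∂μ, Tendsto (fun k ↦ f k x) atTop (𝓝 0)) :
    Tendsto (fun k ↦ ∫ x, |f k x| ∂μ) atTop (𝓝 0) := by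
  refine tendsto_order.2 ⟨fun a ha ↦ .of_forall fun k ↦ ha.trans_le (integral_nonneg fun x ↦
    abs_nonneg _), fun δ hδ ↦ ?_⟩
  obtain ⟨ε, hε, hεM⟩ := exists_pos_mul_lt hδ M
  obtain ⟨C, hC⟩ := hdom ε hε
  have hW := tendsto_integral_max_abs_sub_mul hε.le hf (fun k ↦ (hg k).aestronglyMeasurable) hg₀
    hh hC hlim
  filter_upwards [hW.eventually (gt_mem_nhds (sub_pos.2 hεM))] with k hk
  have hWint : Integrable (fun x ↦ max (|f k x| - ε * g k x) 0) μ :=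
    (hh.const_mul C).abs.mono' (((hf k).norm.sub ((hg k).1.const_mul ε)).sup
      aestronglyMeasurable_const) (.of_forall fun x ↦ norm_max_abs_sub_le_abs (hC k x))
  calc ∫ x, |f k x| ∂μ ≤ ∫ x, (max (|f k x| - ε * g k x) 0 + ε * g k x) ∂μ :=
        integral_mono_of_nonneg (.of_forall fun x ↦ abs_nonneg _) (hWint.add ((hg k).const_mul ε))
          (.of_forall fun x ↦ by linarith [le_max_left (|f k x| - ε * g k x) 0])
    _ = ∫ x, max (|f k x| - ε * g k x) 0 ∂μ + ε * ∫ x, g k x ∂μ := by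
        rw [integral_add hWint ((hg k).const_mul ε), integral_const_mul]
    _ < δ := by nlinarith [hgM k]

end

theorem brezis_lieb_general {Ω : Type*} [MeasurableSpace Ω] (μ : Measure Ω) {p : ℝ} (hp : 1 < p)
    (u : ℕ → Ω → ℝ) (u₀ : Ω → ℝ)
    (hmeas : ∀ k, AEStronglyMeasurable (u k) μ)
    (hb : ∃ c : ℝ≥0∞, c < ⊤ ∧ ∀ k, eLpNorm (u k) (ENNReal.ofReal p) μ ≤ c)
    (hae : ∀ᵐ x ∂μ, Tendsto (fun k => u k x) atTop (nhds (u₀ x))) :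
    Tendsto (fun k => (∫ x, |u k x| ^ p ∂μ) - ∫ x, |u k x - u₀ x| ^ p ∂μ) atTop
      (nhds (∫ x, |u₀ x| ^ p ∂μ)) := by
  obtain ⟨c, hc, hbc⟩ := hb
  have hp₀ : 0 < p := by linarith
  have hu : ∀ k, MemLp (u k) (ENNReal.ofReal p) μ := fun k ↦ ⟨hmeas k, (hbc k).trans_lt hc⟩
  have hu₀ : MemLp u₀ (ENNReal.ofReal p) μ := memLp_of_ae_tendsto hmeas hc hbc hae
  have hmeas₀ : AEStronglyMeasurable u₀ μ := hu₀.1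
  have hintegrable : ∀ {v : Ω → ℝ}, MemLp v (ENNReal.ofReal p) μ →
      Integrable (fun x ↦ |v x| ^ p) μ :=
    fun hv ↦ by simpa using MemLp.integrable_norm_rpow_ofReal hp₀ hv
  have hdiff_int : ∀ k, Integrable (fun x ↦ |u k x - u₀ x| ^ p) μ :=
    fun k ↦ hintegrable ((hu k).sub hu₀)
  have hdiff_le : ∀ k, ∫ x, |u k x - u₀ x| ^ p ∂μ ≤
      (c + eLpNorm u₀ (ENNReal.ofReal p) μ).toReal ^ p := fun k ↦ by
    simpa using integral_norm_rpow_le_of_eLpNorm_le hp₀ ((hmeas k).sub hmeas₀)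
      (ENNReal.add_ne_top.2 ⟨hc.ne, hu₀.2.ne⟩)
      ((eLpNorm_sub_le (hmeas k) hmeas₀ (by simpa using hp.le)).trans (add_le_add_left (hbc k) _))
  refine tendsto_integral_sub_of_tendsto_integral_abs_sub (fun k ↦ hintegrable (hu k)) hdiff_int
    (hintegrable hu₀) ?_
  refine tendsto_integral_abs_of_forall_abs_le_mul_add (fun k ↦ by fun_prop (disch := exact hp₀.le))
    hdiff_int (fun k x ↦ by positivity) hdiff_le (hintegrable hu₀) (fun ε hε ↦ ?_) ?_
  · obtain ⟨C, hC⟩ := exists_abs_abs_add_rpow_sub_sub_le hp.le hε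
    exact ⟨C, fun k x ↦ by simpa using hC (u k x - u₀ x) (u₀ x)⟩
  · have hcont : Continuous fun t : ℝ ↦ |t| ^ p := by fun_prop (disch := exact hp₀.le)
    filter_upwards [hae] with x hx
    simpa [Real.zero_rpow hp₀.ne'] using
      ((hcont.tendsto _).comp hx |>.sub ((hcont.tendsto _).comp (hx.sub_const (u₀ x)))).sub_const
        (|u₀ x| ^ p)

/-- Brezis–Lieb lemma: for a bounded sequence in L^p (1 < p < ∞) converging a.e. to u,
∫|u_k|^p − ∫|u_k − u|^p → ∫|u|^p. -/
theorem brezis_lieb {Ω : Type*} [MeasurableSpace Ω] (μ : Measure Ω) {p : ℝ} (hp : 1 < p)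
    (u : ℕ → Ω → ℝ) (u₀ : Ω → ℝ)
    (hmeas : ∀ k, AEStronglyMeasurable (u k) μ) (hmeas₀ : AEStronglyMeasurable u₀ μ)
    (hb : ∃ c : ℝ≥0∞, c < ⊤ ∧ ∀ k, eLpNorm (u k) (ENNReal.ofReal p) μ ≤ c)
    (hae : ∀ᵐ x ∂μ, Tendsto (fun k => u k x) atTop (nhds (u₀ x))) :
    Tendsto (fun k => (∫ x, |u k x| ^ p ∂μ) - ∫ x, |u k x - u₀ x| ^ p ∂μ) atTop
      (nhds (∫ x, |u₀ x| ^ p ∂μ)) :=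
  brezis_lieb_general μ hp u u₀ hmeas hb hae
end

section
/- Let H be a Hilbert space, (u_k) a bounded sequence in H, and (g_k^{(1)}), …, (g_k^{(N)}) sequences of unitary operators on H with (g_k^{(m)})^{-1} g_k^{(n)} → 0 in the weak operator topology for m ≠ n. Suppose (g_k^{(n)})^{-1} u_k ⇀ w^{(n)} for each n. Then for each n, (g_k^{(n)})^{-1} (u_k − ∑_{m=1}^N g_k^{(m)} w^{(m)}) ⇀ 0 in H. -/
open Filter Topology

section Decoupled

variable {𝕜 H ι : Type*} [RCLike 𝕜] [NormedAddCommGroup H] [InnerProductSpace 𝕜 H]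
  [Fintype ι]

theorem tendsto_inner_symm_sum_apply_of_decoupled (g : ℕ → ι → (H ≃ₗᵢ[𝕜] H)) (w : ι → H)
    (hdec : ∀ m n : ι, m ≠ n → ∀ x y : H,
      Tendsto (fun k => inner 𝕜 ((g k m).symm ((g k n) x)) y) atTop (𝓝 0))
    (n : ι) (x : H) :
    Tendsto (fun k => inner 𝕜 ((g k n).symm (∑ m, (g k m) (w m))) x) atTop
      (𝓝 (inner 𝕜 (w n) x)) := by
  classical
  have hterm : ∀ m, Tendsto (fun k => inner 𝕜 ((g k n).symm ((g k m) (w m))) x) atTop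
      (𝓝 (if n = m then inner 𝕜 (w m) x else 0)) := by
    intro m
    by_cases hnm : n = m
    · subst hnm
      simpa only [if_pos, LinearIsometryEquiv.symm_apply_apply] using tendsto_const_nhds
    · simpa only [hnm, if_false] using hdec n m hnm (w m) x
  simpa only [map_sum, sum_inner, Finset.sum_ite_eq, Finset.mem_univ, if_true] using
    tendsto_finsetSum Finset.univ fun m _ => hterm m

end Decoupled

theorem remainder_has_zero_profiles_general {H : Type*} [NormedAddCommGroup H]
    [InnerProductSpace ℝ H]
    (u : ℕ → H)
    {N : ℕ} (g : ℕ → Fin N → (H ≃ₗᵢ[ℝ] H)) (w : Fin N → H)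
    (hdec : ∀ m n : Fin N, m ≠ n → ∀ x y : H,
      Tendsto (fun k => (inner ℝ ((g k m).symm ((g k n) x)) y : ℝ)) atTop (nhds 0))
    (hw : ∀ (n : Fin N) (x : H),
      Tendsto (fun k => (inner ℝ ((g k n).symm (u k)) x : ℝ)) atTop (nhds (inner ℝ (w n) x))) :
    ∀ (n : Fin N) (x : H),
      Tendsto (fun k => (inner ℝ ((g k n).symm (u k - ∑ m, (g k m) (w m))) x : ℝ)) atTop
        (nhds 0) := by
  intro n x
  have hlim := (hw n x).sub (tendsto_inner_symm_sum_apply_of_decoupled g w hdec n x)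
  rw [sub_self] at hlim
  simpa only [map_sub, inner_sub_left] using hlim

/-- After subtracting all elementary concentrations g_k^{(m)} w^{(m)}, the remainder has
zero weak limit along each decoupled operator sequence. -/
theorem remainder_has_zero_profiles {H : Type*} [NormedAddCommGroup H]
    [InnerProductSpace ℝ H]
    (u : ℕ → H) (hb : ∃ c : ℝ, ∀ k, ‖u k‖ ≤ c)
    {N : ℕ} (g : ℕ → Fin N → (H ≃ₗᵢ[ℝ] H)) (w : Fin N → H)
    (hdec : ∀ m n : Fin N, m ≠ n → ∀ x y : H,
      Tendsto (fun k => (inner ℝ ((g k m).symm ((g k n) x)) y : ℝ)) atTop (nhds 0))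
    (hw : ∀ (n : Fin N) (x : H),
      Tendsto (fun k => (inner ℝ ((g k n).symm (u k)) x : ℝ)) atTop (nhds (inner ℝ (w n) x))) :
    ∀ (n : Fin N) (x : H),
      Tendsto (fun k => (inner ℝ ((g k n).symm (u k - ∑ m, (g k m) (w m))) x : ℝ)) atTop
        (nhds 0) :=
  remainder_has_zero_profiles_general u g w hdec hw
end
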